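/- (Correctness of the FOQCS-LCU block encoding.) Let H = Σ_{i,j} c_{ij} P(i,j) with P(i,j) = ⊗_ℓ Z^{j_ℓ} X^{i_ℓ}, let λ = Σ_{i,j} |c_{ij}|, and define the 2n-qubit states |R⟩ = λ^{-1/2} Σ_{i,j} e^{i arg(c_{ij})} √|c_{ij}| |i⟩|j⟩ and |L⟩ = λ^{-1/2} Σ_{i,j} √|c_{ij}| |i⟩|j⟩. Let SELECT be the unitary on (ℂ²)^{⊗2n} ⊗ (ℂ²)^{⊗n} acting by SELECT (|i⟩|j⟩ ⊗ |φ⟩) = |i⟩|j⟩ ⊗ P(i,j)|φ⟩ (i.e., parallel CNOTs from the first register followed by CZs from the second). Then for every n-qubit vector φ, (⟨L| ⊗ I) · SELECT · (|R⟩ ⊗ I) φ = (1/λ) H φ. -/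

import Mathlib

open Matrix

noncomputable section

/-- Pauli `X`. -/
def X : Matrix (Fin 2) (Fin 2) ℂ := !![0, 1; 1, 0]

/-- Pauli `Z`. -/
def Z : Matrix (Fin 2) (Fin 2) ℂ := !![1, 0; 0, -1]

/-- The `n`-qubit operator `P(i,j) = ⊗_{ℓ=0}^{n-1} Z^{j_ℓ} X^{i_ℓ}`. -/
def P (n : ℕ) (i j : Fin n → Fin 2) :
    Matrix (Fin n → Fin 2) (Fin n → Fin 2) ℂ :=
  fun x y => ∏ ℓ, (Z ^ (j ℓ : ℕ) * X ^ (i ℓ : ℕ)) (x ℓ) (y ℓ)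

/-- The `2n`-qubit ancilla index: a pair of `n`-bit strings `(i, j)`. -/
abbrev Anc (n : ℕ) := (Fin n → Fin 2) × (Fin n → Fin 2)

/-- The right state-preparation state:
`|R⟩ = λ^{-1/2} Σ_{i,j} e^{i arg(c_{ij})} √|c_{ij}| |i⟩|j⟩`. -/
def Rvec (n : ℕ) (c : (Fin n → Fin 2) → (Fin n → Fin 2) → ℂ) (lam : ℝ) :
    Anc n → ℂ :=
  fun a => (Real.sqrt lam : ℂ)⁻¹ *
    Complex.exp (Complex.I * (c a.1 a.2).arg) * (Real.sqrt ‖c a.1 a.2‖ : ℂ)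

/-- The left state-preparation state: `|L⟩ = λ^{-1/2} Σ_{i,j} √|c_{ij}| |i⟩|j⟩`. -/
def Lvec (n : ℕ) (c : (Fin n → Fin 2) → (Fin n → Fin 2) → ℂ) (lam : ℝ) :
    Anc n → ℂ :=
  fun a => (Real.sqrt lam : ℂ)⁻¹ * (Real.sqrt ‖c a.1 a.2‖ : ℂ)

/-- `SELECT (|i⟩|j⟩ ⊗ |φ⟩) = |i⟩|j⟩ ⊗ P(i,j)|φ⟩`. -/
def SELECT (n : ℕ) :
    Matrix (Anc n × (Fin n → Fin 2)) (Anc n × (Fin n → Fin 2)) ℂ :=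
  fun x y => if x.1 = y.1 then P n y.1.1 y.1.2 x.2 y.2 else 0

/-! The polar decomposition `c = e^{i arg c} |c|` splits each coefficient between the two
state-preparation vectors, so `conj (L a) * R a = c_a / λ`.  Since `SELECT` is block diagonal
over the ancilla basis, contracting it between `⟨L|` and `|R⟩` yields the linear combination
`Σ_a conj (L a) R a P_a = H / λ`. -/

lemma sqrt_norm_mul_exp_arg_mul_sqrt_norm (z : ℂ) :
    (Real.sqrt ‖z‖ : ℂ) * (Complex.exp (Complex.I * z.arg) * Real.sqrt ‖z‖) = z := by
  have hsqrt : (Real.sqrt ‖z‖ : ℂ) * Real.sqrt ‖z‖ = ‖z‖ := by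
    exact_mod_cast Real.mul_self_sqrt (norm_nonneg z)
  calc (Real.sqrt ‖z‖ : ℂ) * (Complex.exp (Complex.I * z.arg) * Real.sqrt ‖z‖)
      = ((Real.sqrt ‖z‖ : ℂ) * Real.sqrt ‖z‖) * Complex.exp (z.arg * Complex.I) := by ring_nf
    _ = z := by rw [hsqrt, Complex.norm_mul_exp_arg_mul_I]

lemma conj_Lvec_mul_Rvec {n : ℕ} (c : (Fin n → Fin 2) → (Fin n → Fin 2) → ℂ) {lam : ℝ}
    (hlam : 0 ≤ lam) (a : Anc n) :
    starRingEnd ℂ (Lvec n c lam a) * Rvec n c lam a = (lam : ℂ)⁻¹ * c a.1 a.2 := by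
  have hsqrt : ((Real.sqrt lam : ℂ) * Real.sqrt lam)⁻¹ = (lam : ℂ)⁻¹ := by
    exact_mod_cast congrArg Inv.inv (Real.mul_self_sqrt hlam)
  calc starRingEnd ℂ (Lvec n c lam a) * Rvec n c lam a
      = ((Real.sqrt lam : ℂ) * Real.sqrt lam)⁻¹ * ((Real.sqrt ‖c a.1 a.2‖ : ℂ) *
          (Complex.exp (Complex.I * (c a.1 a.2).arg) * Real.sqrt ‖c a.1 a.2‖)) := by
        simp only [Lvec, Rvec, map_mul, map_inv₀, Complex.conj_ofReal, mul_inv]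
        ring
    _ = (lam : ℂ)⁻¹ * c a.1 a.2 := by rw [hsqrt, sqrt_norm_mul_exp_arg_mul_sqrt_norm]

lemma SELECT_mulVec_apply {n : ℕ} (r : Anc n → ℂ) (φ : (Fin n → Fin 2) → ℂ)
    (a : Anc n) (x : Fin n → Fin 2) :
    (SELECT n *ᵥ fun p => r p.1 * φ p.2) (a, x) = r a * (P n a.1 a.2 *ᵥ φ) x := by
  rw [mulVec, dotProduct, Fintype.sum_prod_type, Finset.sum_eq_single a, mulVec, dotProduct,
    Finset.mul_sum]
  · exact Finset.sum_congr rfl fun y _ => by simp only [SELECT, if_true]; ring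
  · intro b _ hba
    simp [SELECT, hba.symm]
  · simp

theorem stmt8 (n : ℕ) (c : (Fin n → Fin 2) → (Fin n → Fin 2) → ℂ)
    (lam : ℝ) (hpos : 0 < lam)
    (φ : (Fin n → Fin 2) → ℂ) :
    (fun x => ∑ a : Anc n, (starRingEnd ℂ) (Lvec n c lam a) *
        (SELECT n).mulVec (fun p => Rvec n c lam p.1 * φ p.2) (a, x))
    = (lam : ℂ)⁻¹ • (∑ i, ∑ j, c i j • P n i j).mulVec φ := by
  funext x
  simp only [SELECT_mulVec_apply, ← mul_assoc, conj_Lvec_mul_Rvec c hpos.le]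
  simp only [sum_mulVec, smul_mulVec, Pi.smul_apply, Finset.sum_apply, smul_eq_mul,
    Finset.mul_sum, Fintype.sum_prod_type, mul_assoc]
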